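/- arXiv:2306.15874 — 4 statements merged into one kernel-verified Lean document; each statement's English description precedes it below -/
import Mathlib

section
/- Let (𝔤, P_𝔤) be a Rota-Baxter Lie algebra of weight λ and V a vector space with an extending datum Ω(𝔤,V) = (⊲, ▷, f, {·,·}, P₁, P₂). Define on 𝔤 × V the bracket [(g,x),(h,y)] = ([g,h] + x▷h − y▷g + f(x,y), {x,y} + x⊲h − y⊲g) and the operator P̃(g,x) = (P_𝔤(g)+P₁(x), P₂(x)). If 𝔤 × V with this bracket and P̃ is a Rota-Baxter Lie algebra (the unified product), then (V, P₂) with action ⊲ is a right Rota-Baxter module over (𝔤, P_𝔤): in particular P₂(x) ⊲ P_𝔤(g) = P₂(x ⊲ P_𝔤(g)) + P₂(P₂(x) ⊲ g) + λ P₂(x ⊲ g) for all g ∈ 𝔤, x ∈ V. -/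
section UnifiedProduct

variable {k L V : Type*} [Field k] [LieRing L] [LieAlgebra k L]
  [AddCommGroup V] [Module k V]

/-- The bracket of the unified product on `𝔤 × V`:
`[(g,x),(h,y)] = ([g,h] + x▷h − y▷g + f(x,y), {x,y} + x⊲h − y⊲g)`. -/
def uBr (tril : V →ₗ[k] L →ₗ[k] V) (trir : V →ₗ[k] L →ₗ[k] L)
    (f : V →ₗ[k] V →ₗ[k] L) (br : V →ₗ[k] V →ₗ[k] V)
    (p q : L × V) : L × V :=
  (⁅p.1, q.1⁆ + trir p.2 q.1 - trir q.2 p.1 + f p.2 q.2,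
    br p.2 q.2 + tril p.2 q.1 - tril q.2 p.1)

/-- The operator of the unified product on `𝔤 × V`:
`P̃(g,x) = (P_𝔤(g) + P₁(x), P₂(x))`. -/
def uP (P : L →ₗ[k] L) (P₁ : V →ₗ[k] L) (P₂ : V →ₗ[k] V) (p : L × V) : L × V :=
  (P p.1 + P₁ p.2, P₂ p.2)

end UnifiedProduct

/-- If the unified product `𝔤 ♮ V` is a Rota-Baxter Lie algebra of weight `λ`, then
`(V, P₂)` with the action `⊲` is a right Rota-Baxter module over `(𝔤, P_𝔤)`; in
particular `P₂(x) ⊲ P_𝔤(g) = P₂(x ⊲ P_𝔤(g)) + P₂(P₂(x) ⊲ g) + λ P₂(x ⊲ g)`. -/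
theorem unified_product_gives_rb_module {k L V : Type*} [Field k] [LieRing L]
    [LieAlgebra k L] [AddCommGroup V] [Module k V] (lam : k) (P : L →ₗ[k] L)
    (hP : ∀ g h : L, ⁅P g, P h⁆ = P (⁅P g, h⁆ + ⁅g, P h⁆ + lam • ⁅g, h⁆))
    (tril : V →ₗ[k] L →ₗ[k] V) (trir : V →ₗ[k] L →ₗ[k] L)
    (f : V →ₗ[k] V →ₗ[k] L) (br : V →ₗ[k] V →ₗ[k] V)
    (P₁ : V →ₗ[k] L) (P₂ : V →ₗ[k] V)
    (halt : ∀ p : L × V, uBr tril trir f br p p = 0)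
    (hjac : ∀ p q r : L × V,
      uBr tril trir f br (uBr tril trir f br p q) r +
        uBr tril trir f br (uBr tril trir f br q r) p +
        uBr tril trir f br (uBr tril trir f br r p) q = 0)
    (hrb : ∀ p q : L × V,
      uBr tril trir f br (uP P P₁ P₂ p) (uP P P₁ P₂ q) =
        uP P P₁ P₂ (uBr tril trir f br (uP P P₁ P₂ p) q +
          uBr tril trir f br p (uP P P₁ P₂ q) + lam • uBr tril trir f br p q)) :
    (∀ (x : V) (g h : L), tril x ⁅g, h⁆ = tril (tril x g) h - tril (tril x h) g) ∧
    (∀ (g : L) (x : V),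
      tril (P₂ x) (P g) =
        P₂ (tril x (P g)) + P₂ (tril (P₂ x) g) + lam • P₂ (tril x g)) := by
  constructor
  · intro x g h
    have h1 := congrArg Prod.snd (hjac (0, x) (g, 0) (h, 0))
    simp only [uBr, Prod.snd_add, Prod.fst_add, map_zero, LinearMap.zero_apply,
      Prod.snd_zero, Prod.fst_zero, zero_add, add_zero, sub_zero, zero_sub,
      lie_zero, zero_lie, map_neg, LinearMap.neg_apply, map_add, map_sub] at h1
    linear_combination (norm := module) (-1 : k) • h1
  · intro g x
    have h1 := congrArg Prod.snd (hrb (0, x) (g, 0))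
    simp only [uBr, uP, Prod.snd_add, Prod.fst_add, map_zero, LinearMap.zero_apply,
      Prod.snd_zero, Prod.fst_zero, zero_add, add_zero, sub_zero, zero_sub,
      Prod.smul_snd, Prod.snd_zero, map_neg, map_add, map_sub, map_smul,
      LinearMap.neg_apply, smul_zero, smul_neg, smul_sub, smul_add] at h1
    linear_combination (norm := module) h1
end

section
/- Let (𝔤, P_𝔤) be a Rota-Baxter Lie algebra of weight λ and Ω(𝔤,V) an extending datum whose bracket makes 𝔤 × V a Lie algebra. Then the identity [P̃(g,0), P̃(0,y)] = P̃([P̃(g,0),(0,y)] + [(g,0), P̃(0,y)] + λ[(g,0),(0,y)]) holds for all g ∈ 𝔤, y ∈ V if and only if the following two conditions hold for all g ∈ 𝔤, y ∈ V: (i) [P_𝔤(g), P₁(y)] − P₂(y) ▷ P_𝔤(g) + P_𝔤(y ▷ P_𝔤(g)) + P₁(y ⊲ P_𝔤(g)) − P_𝔤([g, P₁(y)]) + P_𝔤(P₂(y) ▷ g) + P₁(P₂(y) ⊲ g) + λP_𝔤(y ▷ g) + λP₁(y ⊲ g) = 0, and (ii) P₂(y) ⊲ P_𝔤(g) − P₂(y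 ⊲ P_𝔤(g)) − P₂(P₂(y) ⊲ g) − λP₂(y ⊲ g) = 0. -/
/-- The Rota-Baxter identity for `P̃` on pairs `((g,0),(0,y))` holds for all `g ∈ 𝔤`,
`y ∈ V` if and only if the compatibility conditions (i) and (ii) hold. -/
theorem rb_identity_mixed_iff {k L V : Type*} [Field k] [LieRing L]
    [LieAlgebra k L] [AddCommGroup V] [Module k V] (lam : k) (P : L →ₗ[k] L)
    (hP : ∀ g h : L, ⁅P g, P h⁆ = P (⁅P g, h⁆ + ⁅g, P h⁆ + lam • ⁅g, h⁆))
    (tril : V →ₗ[k] L →ₗ[k] V) (trir : V →ₗ[k] L →ₗ[k] L)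
    (f : V →ₗ[k] V →ₗ[k] L) (br : V →ₗ[k] V →ₗ[k] V)
    (P₁ : V →ₗ[k] L) (P₂ : V →ₗ[k] V)
    (halt : ∀ p : L × V, uBr tril trir f br p p = 0)
    (hjac : ∀ p q r : L × V,
      uBr tril trir f br (uBr tril trir f br p q) r +
        uBr tril trir f br (uBr tril trir f br q r) p +
        uBr tril trir f br (uBr tril trir f br r p) q = 0) :
    (∀ (g : L) (y : V),
      uBr tril trir f br (uP P P₁ P₂ ((g, 0) : L × V)) (uP P P₁ P₂ ((0, y) : L × V)) =
        uP P P₁ P₂ (uBr tril trir f br (uP P P₁ P₂ ((g, 0) : L × V)) (0, y) +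
          uBr tril trir f br (g, 0) (uP P P₁ P₂ ((0, y) : L × V)) +
          lam • uBr tril trir f br ((g, 0) : L × V) (0, y))) ↔
    ((∀ (g : L) (y : V),
        ⁅P g, P₁ y⁆ - trir (P₂ y) (P g) + P (trir y (P g)) + P₁ (tril y (P g)) -
          P ⁅g, P₁ y⁆ + P (trir (P₂ y) g) + P₁ (tril (P₂ y) g) +
          lam • P (trir y g) + lam • P₁ (tril y g) = 0) ∧
      (∀ (g : L) (y : V),
        tril (P₂ y) (P g) - P₂ (tril y (P g)) - P₂ (tril (P₂ y) g) -
          lam • P₂ (tril y g) = 0)) := by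
  have key : ∀ (g : L) (y : V),
      (uBr tril trir f br (uP P P₁ P₂ ((g, 0) : L × V)) (uP P P₁ P₂ ((0, y) : L × V)) =
        uP P P₁ P₂ (uBr tril trir f br (uP P P₁ P₂ ((g, 0) : L × V)) (0, y) +
          uBr tril trir f br (g, 0) (uP P P₁ P₂ ((0, y) : L × V)) +
          lam • uBr tril trir f br ((g, 0) : L × V) (0, y))) ↔
      ((⁅P g, P₁ y⁆ - trir (P₂ y) (P g) + P (trir y (P g)) + P₁ (tril y (P g)) -
          P ⁅g, P₁ y⁆ + P (trir (P₂ y) g) + P₁ (tril (P₂ y) g) +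
          lam • P (trir y g) + lam • P₁ (tril y g) = 0) ∧
       (tril (P₂ y) (P g) - P₂ (tril y (P g)) - P₂ (tril (P₂ y) g) -
          lam • P₂ (tril y g) = 0)) := by
    intro g y
    simp only [uBr, uP, Prod.mk.injEq, Prod.fst_add, Prod.snd_add, Prod.smul_mk,
      Prod.mk_add_mk, smul_add, smul_sub, smul_neg, map_add, map_sub, map_smul,
      map_neg, map_zero, LinearMap.zero_apply, LinearMap.add_apply, LinearMap.sub_apply,
      LinearMap.smul_apply, lie_zero, zero_lie, add_zero, zero_add, sub_zero, zero_sub]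
    constructor
    · rintro ⟨h1, h2⟩
      constructor
      · rw [← sub_eq_zero] at h1; rw [← h1]; abel
      · rw [← sub_eq_zero, ← neg_eq_zero] at h2; rw [← h2]; abel
    · rintro ⟨h1, h2⟩
      constructor
      · rw [← sub_eq_zero]; rw [← h1]; abel
      · rw [← sub_eq_zero]; rw [← neg_eq_zero] at h2; rw [← h2]; abel
  constructor
  · intro h
    exact ⟨fun g y => ((key g y).mp (h g y)).1, fun g y => ((key g y).mp (h g y)).2⟩
  · rintro ⟨h1, h2⟩ g y
    exact (key g y).mpr ⟨h1 g y, h2 g y⟩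
end

section
/- Let (𝔤, P_𝔤) be a Rota-Baxter Lie algebra of weight λ over a field k and V a 1-dimensional vector space with basis {x}. Given an extended derivation (ε, D, g₀, k₀) of (𝔤,P_𝔤), the formulas x ⊲ g = ε(g)x, x ▷ g = D(g), f = 0, {·,·} = 0, P₁(x) = g₀, P₂(x) = k₀x define a Rota-Baxter Lie extending structure, i.e. the product space 𝔤 × V with bracket [(g, ax),(h, bx)] = ([g,h] + aD(h) − bD(g), (aε(h) − bε(g))x) and operator P̃(g, ax) = (P_𝔤(g) + a g₀, a k₀ x) is a Rota-Baxter Lie algebra of weight λ. -/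
section FlagExt

variable {k L : Type*} [Field k] [LieRing L] [LieAlgebra k L]

/-- The bracket on `𝔤 × V` (`V = k·x` one-dimensional) attached to `(ε, D)`:
`[(g, a·x),(h, b·x)] = ([g,h] + a·D(h) − b·D(g), (a·ε(h) − b·ε(g))·x)`. -/
def eBr (ε : L →ₗ[k] k) (D : L →ₗ[k] L) (p q : L × k) : L × k :=
  (⁅p.1, q.1⁆ + p.2 • D q.1 - q.2 • D p.1, p.2 * ε q.1 - q.2 * ε p.1)

/-- The operator on `𝔤 × V` attached to `(g₀, k₀)`:
`P̃(g, a·x) = (P_𝔤(g) + a·g₀, a·k₀·x)`. -/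
def eP (P : L →ₗ[k] L) (g₀ : L) (k₀ : k) (p : L × k) : L × k :=
  (P p.1 + p.2 • g₀, p.2 * k₀)

end FlagExt

/-- An extended derivation `(ε, D, g₀, k₀)` of a Rota-Baxter Lie algebra `(𝔤, P_𝔤)`
of weight `λ` yields a Rota-Baxter Lie extending structure through a 1-dimensional
space: `𝔤 × k` with the bracket `eBr` and operator `eP` is a Rota-Baxter Lie
algebra of weight `λ`. -/
theorem extended_derivation_gives_unified_product {k L : Type*} [Field k] [LieRing L]
    [LieAlgebra k L] (lam : k) (P : L →ₗ[k] L)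
    (hP : ∀ g h : L, ⁅P g, P h⁆ = P (⁅P g, h⁆ + ⁅g, P h⁆ + lam • ⁅g, h⁆))
    (ε : L →ₗ[k] k) (D : L →ₗ[k] L) (g₀ : L) (k₀ : k)
    (h1 : ∀ g h : L, ε ⁅g, h⁆ = 0)
    (h2 : ∀ g h : L, D ⁅g, h⁆ = ⁅D g, h⁆ + ⁅g, D h⁆ + ε g • D h - ε h • D g)
    (h3 : ∀ g : L,
      ⁅P g, g₀⁆ - k₀ • D (P g) + P (D (P g)) + ε (P g) • g₀ - P ⁅g, g₀⁆ +
        k₀ • P (D g) + (k₀ * ε g) • g₀ + lam • P (D g) + (lam * ε g) • g₀ = 0)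
    (h4 : ∀ g : L, k₀ ^ 2 * ε g + lam * (k₀ * ε g) = 0) :
    (∀ p : L × k, eBr ε D p p = 0) ∧
    (∀ p q r : L × k,
      eBr ε D (eBr ε D p q) r + eBr ε D (eBr ε D q r) p + eBr ε D (eBr ε D r p) q = 0) ∧
    (∀ p q : L × k,
      eBr ε D (eP P g₀ k₀ p) (eP P g₀ k₀ q) =
        eP P g₀ k₀ (eBr ε D (eP P g₀ k₀ p) q + eBr ε D p (eP P g₀ k₀ q) +
          lam • eBr ε D p q)) := by
  refine ⟨?_, ?_, ?_⟩
  · rintro ⟨g, a⟩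
    simp [eBr]
  · rintro ⟨g, a⟩ ⟨h, b⟩ ⟨l, c⟩
    have jac : ⁅⁅g, h⁆, l⁆ + ⁅⁅h, l⁆, g⁆ + ⁅⁅l, g⁆, h⁆ = (0 : L) := by
      linear_combination (norm := module) - lie_jacobi g h l
        - lie_skew ⁅g, h⁆ l - lie_skew ⁅h, l⁆ g - lie_skew ⁅l, g⁆ h
    simp only [eBr, Prod.mk.injEq, Prod.ext_iff, Prod.fst_add, Prod.snd_add,
      Prod.fst_zero, Prod.snd_zero]
    constructor
    · simp only [map_add, map_sub, map_smul, h2, h1, add_lie, sub_lie, smul_lie,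
        smul_zero, zero_smul, smul_sub, smul_add]
      linear_combination (norm := module) jac
        + a • (lie_skew h (D l)) + b • (lie_skew l (D g)) + c • (lie_skew g (D h))
    · simp only [map_add, map_sub, map_smul, h1, smul_eq_mul]
      ring
  · rintro ⟨g, a⟩ ⟨h, b⟩
    simp only [eBr, eP, Prod.mk.injEq, Prod.ext_iff, Prod.fst_add, Prod.snd_add,
      Prod.smul_fst, Prod.smul_snd, smul_eq_mul]
    constructor
    · simp only [map_add, map_sub, map_smul, h1, add_lie, lie_add, smul_lie, lie_smul,
        lie_self, smul_zero, smul_add, smul_sub, smul_eq_mul]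
      have hPsk : P ⁅g₀, h⁆ = - P ⁅h, g₀⁆ := by rw [← lie_skew h g₀, map_neg, neg_neg]
      have hP' : ⁅P g, P h⁆ = P ⁅P g, h⁆ + P ⁅g, P h⁆ + lam • P ⁅g, h⁆ := by
        rw [hP g h, map_add, map_add, map_smul]
      linear_combination (norm := module) hP' + b • (h3 g) - a • (h3 h)
        - a • (lie_skew g₀ (P h)) - a • hPsk
    · simp only [map_add, map_smul, smul_eq_mul]
      linear_combination b * h4 g - a * h4 h
end

section
/- Let (𝔤, P_𝔤) be a Rota-Baxter Lie algebra of weight λ and V a 1-dimensional vector space with basis {x}. If the product space 𝔤 × V with bracket [(g, ax),(h, bx)] = ([g,h] + aD(h) − bD(g), (aε(h) − bε(g))x) and operator P̃(g, ax) = (P_𝔤(g) + a g₀, a k₀x) is a Rota-Baxter Lie algebra of weight λ, then (ε, D, g₀, k₀) is an extended derivation of (𝔤, P_𝔤); in particular k₀² ε(g) + λ k₀ ε(g) = 0 for all g ∈ 𝔤. -/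
/-- Conversely, if `𝔤 × k` with the bracket `eBr` and operator `eP` is a Rota-Baxter
Lie algebra of weight `λ`, then `(ε, D, g₀, k₀)` is an extended derivation of
`(𝔤, P_𝔤)`; in particular `k₀²ε(g) + λk₀ε(g) = 0` for all `g`. -/
theorem unified_product_gives_extended_derivation {k L : Type*} [Field k] [LieRing L]
    [LieAlgebra k L] (lam : k) (P : L →ₗ[k] L)
    (hP : ∀ g h : L, ⁅P g, P h⁆ = P (⁅P g, h⁆ + ⁅g, P h⁆ + lam • ⁅g, h⁆))
    (ε : L →ₗ[k] k) (D : L →ₗ[k] L) (g₀ : L) (k₀ : k)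
    (halt : ∀ p : L × k, eBr ε D p p = 0)
    (hjac : ∀ p q r : L × k,
      eBr ε D (eBr ε D p q) r + eBr ε D (eBr ε D q r) p + eBr ε D (eBr ε D r p) q = 0)
    (hrb : ∀ p q : L × k,
      eBr ε D (eP P g₀ k₀ p) (eP P g₀ k₀ q) =
        eP P g₀ k₀ (eBr ε D (eP P g₀ k₀ p) q + eBr ε D p (eP P g₀ k₀ q) +
          lam • eBr ε D p q)) :
    (∀ g h : L, ε ⁅g, h⁆ = 0) ∧
    (∀ g h : L, D ⁅g, h⁆ = ⁅D g, h⁆ + ⁅g, D h⁆ + ε g • D h - ε h • D g) ∧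
    (∀ g : L,
      ⁅P g, g₀⁆ - k₀ • D (P g) + P (D (P g)) + ε (P g) • g₀ - P ⁅g, g₀⁆ +
        k₀ • P (D g) + (k₀ * ε g) • g₀ + lam • P (D g) + (lam * ε g) • g₀ = 0) ∧
    (∀ g : L, k₀ ^ 2 * ε g + lam * (k₀ * ε g) = 0) := by
  have key : ∀ g h : L,
      eBr ε D (eBr ε D (g,(0:k)) (h,0)) (0,1) + eBr ε D (eBr ε D (h,0) (0,1)) (g,0) +
        eBr ε D (eBr ε D ((0:L),(1:k)) (g,0)) (h,0) = 0 := fun g h => hjac _ _ _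
  have keyrb : ∀ g : L,
      eBr ε D (eP P g₀ k₀ (g,(0:k))) (eP P g₀ k₀ (0,1)) =
        eP P g₀ k₀ (eBr ε D (eP P g₀ k₀ (g,0)) (0,1) + eBr ε D (g,0) (eP P g₀ k₀ (0,1)) +
          lam • eBr ε D (g,0) (0,1)) := fun g => hrb _ _
  simp only [eBr, eP, Prod.mk_add_mk, Prod.smul_mk, Prod.ext_iff, Prod.mk_eq_zero,
    map_zero, zero_smul, smul_zero, add_zero, zero_add, sub_zero, zero_sub, zero_mul,
    mul_zero, one_smul, mul_one, one_mul, lie_zero, zero_lie, map_add, map_sub, map_neg, map_smul,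
    neg_lie, lie_neg, neg_smul, smul_neg, neg_neg, smul_eq_mul, Prod.fst_zero, Prod.snd_zero] at key keyrb
  refine ⟨?_, ?_, ?_, ?_⟩
  · intro g h
    have := (key g h).2
    linear_combination -this
  · intro g h
    have := (key g h).1
    rw [← lie_skew g (D h)]
    linear_combination (norm := module) -this
  · intro g
    have := (keyrb g).1
    linear_combination (norm := module) this
  · intro g
    have := (keyrb g).2
    linear_combination this
end
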